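/- Let g₀, ε, φ, ρ, h be as in the graph-surface setup with ρ > 0, and suppose φ satisfies the minimality condition h^{αβ} φ_{,αβ} = 0. Then ∂_α(√ρ h^{αβ}) = 0 for each β ∈ {1,2}. -/

import Mathlib

open Matrix Real

/-- First partial derivative in direction `i`. -/
noncomputable def pd (i : Fin 2) (f : (Fin 2 → ℝ) → ℝ) (p : Fin 2 → ℝ) : ℝ :=
  fderiv ℝ f p (Pi.single i 1)

/-- Second partial derivative. -/
noncomputable def pd2 (i j : Fin 2) (f : (Fin 2 → ℝ) → ℝ) (p : Fin 2 → ℝ) : ℝ :=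
  pd i (fun q => pd j f q) p

/-- Third partial derivative. -/
noncomputable def pd3 (i j k : Fin 2) (f : (Fin 2 → ℝ) → ℝ) (p : Fin 2 → ℝ) : ℝ :=
  pd i (fun q => pd2 j k f q) p

/-- `φ^μ = g₀^{μα} φ_{,α}` (index raised with the inverse of `g₀`). -/
noncomputable def phiUp (g₀ : Matrix (Fin 2) (Fin 2) ℝ) (φ : (Fin 2 → ℝ) → ℝ)
    (p : Fin 2 → ℝ) (μ : Fin 2) : ℝ :=
  ∑ α, g₀⁻¹ μ α * pd α φ p

/-- `ρ = 1 + ε g₀^{μν} φ_{,μ} φ_{,ν}`. -/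
noncomputable def rho (g₀ : Matrix (Fin 2) (Fin 2) ℝ) (ε : ℝ) (φ : (Fin 2 → ℝ) → ℝ)
    (p : Fin 2 → ℝ) : ℝ :=
  1 + ε * ∑ μ, ∑ ν, g₀⁻¹ μ ν * pd μ φ p * pd ν φ p

/-- Induced metric `h_{μν} = g₀_{μν} + ε φ_{,μ} φ_{,ν}` of the graph surface. -/
noncomputable def hLow (g₀ : Matrix (Fin 2) (Fin 2) ℝ) (ε : ℝ) (φ : (Fin 2 → ℝ) → ℝ)
    (p : Fin 2 → ℝ) : Matrix (Fin 2) (Fin 2) ℝ :=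
  fun μ ν => g₀ μ ν + ε * pd μ φ p * pd ν φ p

/-- `h^{μν} = g₀^{μν} - (ε/ρ) φ^μ φ^ν`. -/
noncomputable def hUp (g₀ : Matrix (Fin 2) (Fin 2) ℝ) (ε : ℝ) (φ : (Fin 2 → ℝ) → ℝ)
    (p : Fin 2 → ℝ) : Matrix (Fin 2) (Fin 2) ℝ :=
  fun μ ν => g₀⁻¹ μ ν - (ε / rho g₀ ε φ p) * phiUp g₀ φ p μ * phiUp g₀ φ p ν

/-- `λ₀ = (1/2)[φ^{αβ} φ_{,αβ} - (φ^α_{,α})²]`. -/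
noncomputable def lam0 (g₀ : Matrix (Fin 2) (Fin 2) ℝ) (φ : (Fin 2 → ℝ) → ℝ)
    (p : Fin 2 → ℝ) : ℝ :=
  (1/2) * ((∑ α, ∑ β, (∑ μ, ∑ ν, g₀⁻¹ α μ * g₀⁻¹ β ν * pd2 μ ν φ p) * pd2 α β φ p)
    - (∑ α, ∑ β, g₀⁻¹ α β * pd2 α β φ p)^2)

/-- Conformal metric `g_{αβ} = ρ^{-1/2} h_{αβ}`. -/
noncomputable def gLow (g₀ : Matrix (Fin 2) (Fin 2) ℝ) (ε : ℝ) (φ : (Fin 2 → ℝ) → ℝ)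
    (p : Fin 2 → ℝ) : Matrix (Fin 2) (Fin 2) ℝ :=
  fun α β => (Real.sqrt (rho g₀ ε φ p))⁻¹ * (g₀ α β + ε * pd α φ p * pd β φ p)

/-- Inverse conformal metric `g^{αβ} = ρ^{1/2} (g₀^{αβ} - (ε/ρ) φ^α φ^β)`. -/
noncomputable def gUp (g₀ : Matrix (Fin 2) (Fin 2) ℝ) (ε : ℝ) (φ : (Fin 2 → ℝ) → ℝ)
    (p : Fin 2 → ℝ) : Matrix (Fin 2) (Fin 2) ℝ :=
  fun α β => Real.sqrt (rho g₀ ε φ p) *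
    (g₀⁻¹ α β - (ε / rho g₀ ε φ p) * phiUp g₀ φ p α * phiUp g₀ φ p β)

/-- The minimality condition `h^{αβ} φ_{,αβ} = 0` at a point. -/
noncomputable def minimalAt (g₀ : Matrix (Fin 2) (Fin 2) ℝ) (ε : ℝ) (φ : (Fin 2 → ℝ) → ℝ)
    (p : Fin 2 → ℝ) : Prop :=
  ∑ α, ∑ β, hUp g₀ ε φ p α β * pd2 α β φ p = 0


section pdcalc
variable {f g : (Fin 2 → ℝ) → ℝ} {p : Fin 2 → ℝ} {i : Fin 2}

lemma pd_mul (hf : DifferentiableAt ℝ f p) (hg : DifferentiableAt ℝ g p) :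
    pd i (fun q => f q * g q) p = pd i f p * g p + f p * pd i g p := by
  unfold pd; rw [fderiv_fun_mul hf hg]; simp; ring

lemma pd_const_mul (hf : DifferentiableAt ℝ f p) (c : ℝ) :
    pd i (fun q => c * f q) p = c * pd i f p := by
  unfold pd; rw [fderiv_const_mul hf]; simp [mul_comm]

lemma pd_mul_const (hf : DifferentiableAt ℝ f p) (c : ℝ) :
    pd i (fun q => f q * c) p = pd i f p * c := by
  unfold pd; rw [fderiv_mul_const hf]; simp [mul_comm]

lemma pd_const_add (hf : DifferentiableAt ℝ f p) (c : ℝ) :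
    pd i (fun q => c + f q) p = pd i f p := by
  unfold pd; rw [fderiv_const_add]

lemma pd_sub (hf : DifferentiableAt ℝ f p) (hg : DifferentiableAt ℝ g p) :
    pd i (fun q => f q - g q) p = pd i f p - pd i g p := by
  unfold pd; rw [fderiv_fun_sub hf hg]; simp

lemma pd_sum {n : ℕ} (A : Fin n → (Fin 2 → ℝ) → ℝ)
    (hA : ∀ j, DifferentiableAt ℝ (A j) p) :
    pd i (fun q => ∑ j, A j q) p = ∑ j, pd i (A j) p := by
  unfold pd; rw [fderiv_fun_sum (fun j _ => hA j)]; simp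

lemma pd_sqrt (hf : DifferentiableAt ℝ f p) (hne : f p ≠ 0) :
    pd i (fun q => Real.sqrt (f q)) p = pd i f p / (2 * Real.sqrt (f p)) := by
  unfold pd
  rw [show (fun q => Real.sqrt (f q)) = (fun x => Real.sqrt x) ∘ f from rfl,
    ((Real.hasDerivAt_sqrt hne).comp_hasFDerivAt p hf.hasFDerivAt).fderiv]
  simp; ring

lemma pd_inv (hf : DifferentiableAt ℝ f p) (hne : f p ≠ 0) :
    pd i (fun q => (f q)⁻¹) p = -pd i f p / (f p)^2 := by
  unfold pd
  rw [show (fun q => (f q)⁻¹) = (fun y => y⁻¹) ∘ f from rfl,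
    ((hasDerivAt_inv hne).comp_hasFDerivAt p hf.hasFDerivAt).fderiv]
  simp; ring
end pdcalc

section smooth
variable {φ : (Fin 2 → ℝ) → ℝ}

lemma diff_pd (hφ : ContDiff ℝ (⊤ : ℕ∞) φ) (j : Fin 2) : Differentiable ℝ (pd j φ) := by
  have h := (contDiff_infty_iff_fderiv.mp (hφ.of_le (by simp))).2
  have : ContDiff ℝ (⊤ : ℕ∞) (fun q => fderiv ℝ φ q (Pi.single j 1)) :=
    h.clm_apply contDiff_const
  exact this.differentiable (by simp)

lemma pd2_symm (hφ : ContDiff ℝ (⊤ : ℕ∞) φ) (i j : Fin 2) (p : Fin 2 → ℝ) :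
    pd2 i j φ p = pd2 j i φ p := by
  have hd : Differentiable ℝ φ := hφ.differentiable (by simp)
  have h2 : ContDiff ℝ (⊤ : ℕ∞) (fderiv ℝ φ) := (contDiff_infty_iff_fderiv.mp (hφ.of_le (by simp))).2
  have hf'' : HasFDerivAt (fderiv ℝ φ) (fderiv ℝ (fderiv ℝ φ) p) p :=
    ((h2.differentiable (by simp)) p).hasFDerivAt
  have hsymm := second_derivative_symmetric (fun y => (hd y).hasFDerivAt) hf''
    (Pi.single i 1) (Pi.single j 1)
  have key : ∀ v w : Fin 2 → ℝ,
      fderiv ℝ (fun q => fderiv ℝ φ q w) p v = fderiv ℝ (fderiv ℝ φ) p v w := by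
    intro v w
    rw [(hf''.clm_apply (hasFDerivAt_const w p)).fderiv]
    simp
  show pd i (fun q => pd j φ q) p = pd j (fun q => pd i φ q) p
  unfold pd
  rw [key, key, hsymm]
end smooth

theorem stmt10 (g₀ : Matrix (Fin 2) (Fin 2) ℝ) (hsym : g₀.IsSymm) (hdet : g₀.det ≠ 0)
    (ε : ℝ) (hε : ε = 1 ∨ ε = -1) (φ : (Fin 2 → ℝ) → ℝ) (hφ : ContDiff ℝ (⊤ : ℕ∞) φ)
    (hρ : ∀ p, 0 < rho g₀ ε φ p) (hmin : ∀ p, minimalAt g₀ ε φ p) :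
    ∀ p : Fin 2 → ℝ, ∀ β : Fin 2,
      ∑ α, pd α (fun q => Real.sqrt (rho g₀ ε φ q) * hUp g₀ ε φ q α β) p = 0 := by
  intro p β
  have hρp := hρ p
  have hρne : rho g₀ ε φ p ≠ 0 := ne_of_gt hρp
  have hsp : 0 < Real.sqrt (rho g₀ ε φ p) := Real.sqrt_pos.mpr hρp
  have hsne : Real.sqrt (rho g₀ ε φ p) ≠ 0 := ne_of_gt hsp
  have hdpd : ∀ j, Differentiable ℝ (pd j φ) := diff_pd hφ
  have hPUd : ∀ μ : Fin 2, Differentiable ℝ (fun q => phiUp g₀ φ q μ) := by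
    intro μ
    exact Differentiable.fun_sum (fun ν _ => (hdpd ν).const_mul _)
  have hrhod : Differentiable ℝ (rho g₀ ε φ) := by
    have : Differentiable ℝ (fun q => ∑ μ : Fin 2, ∑ ν : Fin 2,
        g₀⁻¹ μ ν * pd μ φ q * pd ν φ q) :=
      Differentiable.fun_sum (fun μ _ => Differentiable.fun_sum (fun ν _ =>
        ((hdpd μ).const_mul _).mul (hdpd ν)))
    exact (this.const_mul ε).const_add 1
  have hsd : DifferentiableAt ℝ (fun q => Real.sqrt (rho g₀ ε φ q)) p :=
    (hrhod p).sqrt hρne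
  have hsinvd : DifferentiableAt ℝ (fun q => (Real.sqrt (rho g₀ ε φ q))⁻¹) p :=
    hsd.inv hsne
  have hpdrho : ∀ α, pd α (rho g₀ ε φ) p
      = ε * ∑ μ, ∑ ν, g₀⁻¹ μ ν *
          (pd2 α μ φ p * pd ν φ p + pd μ φ p * pd2 α ν φ p) := by
    intro α
    have hstep : ∀ μ ν : Fin 2, pd α (fun q => g₀⁻¹ μ ν * pd μ φ q * pd ν φ q) p
        = g₀⁻¹ μ ν * (pd2 α μ φ p * pd ν φ p + pd μ φ p * pd2 α ν φ p) := by
      intro μ ν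
      rw [pd_mul (((hdpd μ) p).const_mul _) ((hdpd ν) p), pd_const_mul ((hdpd μ) p)]
      simp only [pd2]; ring
    have h0 : rho g₀ ε φ = fun q => 1 + ε * ∑ μ : Fin 2, ∑ ν : Fin 2,
        g₀⁻¹ μ ν * pd μ φ q * pd ν φ q := rfl
    rw [h0, pd_const_add, pd_const_mul]
    · rw [pd_sum (fun μ q => ∑ ν : Fin 2, g₀⁻¹ μ ν * pd μ φ q * pd ν φ q) (fun μ => Differentiable.differentiableAt
        (Differentiable.fun_sum (fun ν _ => ((hdpd μ).const_mul _).fun_mul (hdpd ν))))]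
      congr 1
      refine Finset.sum_congr rfl (fun μ _ => ?_)
      rw [pd_sum _ (fun ν => (((hdpd μ).const_mul _).fun_mul (hdpd ν)).differentiableAt)]
      exact Finset.sum_congr rfl (fun ν _ => hstep μ ν)
    · exact Differentiable.differentiableAt
        (Differentiable.fun_sum (fun μ _ => Differentiable.fun_sum (fun ν _ =>
          ((hdpd μ).const_mul _).mul (hdpd ν))))
    · exact Differentiable.differentiableAt
        ((Differentiable.fun_sum (fun μ _ => Differentiable.fun_sum (fun ν _ =>
          ((hdpd μ).const_mul _).mul (hdpd ν)))).const_mul ε)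
  have hpdPU : ∀ α μ : Fin 2, pd α (fun q => phiUp g₀ φ q μ) p
      = ∑ ν, g₀⁻¹ μ ν * pd2 α ν φ p := by
    intro α μ
    have h0 : (fun q => phiUp g₀ φ q μ) = fun q => ∑ ν : Fin 2, g₀⁻¹ μ ν * pd ν φ q := rfl
    rw [h0, pd_sum _ (fun ν => ((hdpd ν).const_mul _).differentiableAt)]
    refine Finset.sum_congr rfl (fun ν _ => ?_)
    rw [pd_const_mul ((hdpd ν) p)]
    simp only [pd2]
  have hFα : ∀ α : Fin 2, (fun q => Real.sqrt (rho g₀ ε φ q) * hUp g₀ ε φ q α β)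
      = fun q => Real.sqrt (rho g₀ ε φ q) * g₀⁻¹ α β
          - ε * ((Real.sqrt (rho g₀ ε φ q))⁻¹ * (phiUp g₀ φ q α * phiUp g₀ φ q β)) := by
    intro α; funext q
    have hss : Real.sqrt (rho g₀ ε φ q) * Real.sqrt (rho g₀ ε φ q) = rho g₀ ε φ q :=
      Real.mul_self_sqrt (hρ q).le
    have h2 : Real.sqrt (rho g₀ ε φ q) ≠ 0 := ne_of_gt (Real.sqrt_pos.mpr (hρ q))
    have hdiv : ε / rho g₀ ε φ q
        = ε * ((Real.sqrt (rho g₀ ε φ q))⁻¹ * (Real.sqrt (rho g₀ ε φ q))⁻¹) := by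
      rw [← hss]; field_simp; rw [Real.sqrt_sq (Real.sqrt_nonneg _)]
    simp only [hUp]
    rw [hdiv]
    generalize g₀⁻¹ α β = Gv
    field_simp
  have hF : ∀ α : Fin 2, pd α (fun q => Real.sqrt (rho g₀ ε φ q) * hUp g₀ ε φ q α β) p
      = pd α (rho g₀ ε φ) p / (2 * Real.sqrt (rho g₀ ε φ p)) * g₀⁻¹ α β
        - ε * ((-(pd α (rho g₀ ε φ) p / (2 * Real.sqrt (rho g₀ ε φ p)))
              / (Real.sqrt (rho g₀ ε φ p))^2) * (phiUp g₀ φ p α * phiUp g₀ φ p β)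
          + (Real.sqrt (rho g₀ ε φ p))⁻¹ *
            ((∑ ν, g₀⁻¹ α ν * pd2 α ν φ p) * phiUp g₀ φ p β
              + phiUp g₀ φ p α * (∑ ν, g₀⁻¹ β ν * pd2 α ν φ p))) := by
    intro α
    rw [hFα α]
    rw [pd_sub (hsd.mul_const _) ((hsinvd.fun_mul (((hPUd α) p).fun_mul ((hPUd β) p))).const_mul ε)]
    rw [pd_mul_const hsd]
    rw [pd_const_mul (hsinvd.fun_mul (((hPUd α) p).fun_mul ((hPUd β) p)))]
    rw [pd_mul hsinvd (((hPUd α) p).fun_mul ((hPUd β) p))]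
    rw [pd_mul ((hPUd α) p) ((hPUd β) p)]
    rw [pd_inv hsd hsne]
    rw [pd_sqrt (hrhod p) hρne]
    rw [hpdPU α α, hpdPU α β]
    try ring
  have hw : pd2 1 0 φ p = pd2 0 1 φ p := pd2_symm hφ 1 0 p
  have hGsymm : (g₀⁻¹).IsSymm := by
    rw [Matrix.IsSymm, Matrix.transpose_nonsing_inv, hsym.eq]
  have hG : g₀⁻¹ 1 0 = g₀⁻¹ 0 1 := hGsymm.apply 0 1
  have hm := hmin p
  simp only [minimalAt, hUp, phiUp, Fin.sum_univ_two] at hm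
  rw [show rho g₀ ε φ p = Real.sqrt (rho g₀ ε φ p) ^ 2 from (Real.sq_sqrt hρp.le).symm] at hm
  rw [hw, hG] at hm
  have hGa : ∀ i j : Fin 2, g₀⁻¹ i j = g₀⁻¹ j i := fun i j => hGsymm.apply j i
  rw [Fin.sum_univ_two, hF 0, hF 1, hpdrho 0, hpdrho 1]
  simp only [phiUp, Fin.sum_univ_two]
  rw [show g₀⁻¹ β 0 = g₀⁻¹ 0 β from hGa β 0, show g₀⁻¹ β 1 = g₀⁻¹ 1 β from hGa β 1, hw, hG]
  linear_combination (-(ε / Real.sqrt (rho g₀ ε φ p)) *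
    (g₀⁻¹ 0 β * pd 0 φ p + g₀⁻¹ 1 β * pd 1 φ p)) * hm
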